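/- arXiv:2405.02268 — 6 statements merged into one kernel-verified Lean document; each statement's English description precedes it below -/
import Mathlib

section
/- Let E be a real inner product space and let γ : ℝ → E be a smooth (infinitely differentiable) curve such that for every j ∈ ℕ the norm of the j-th derivative is constant in t, i.e. for each j there is a constant c_j with ‖γ^{(j)}(t)‖ = c_j for all t ∈ ℝ. Then for all j, k ∈ ℕ the inner product ⟨γ^{(j)}(t), γ^{(k)}(t)⟩ is constant in t, i.e. for each pair (j,k) there is a constant c_{j,k} with ⟨γ^{(j)}(t), γ^{(k)}(t)⟩ = c_{j,k} for all t ∈ ℝ. -/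
open scoped RealInnerProductSpace

/-- If every iterated derivative of a smooth curve in a real inner product space has
constant norm, then every pairwise inner product of iterated derivatives is constant. -/
theorem constant_derivative_norms_imp_constant_inner_products
    {E : Type*} [NormedAddCommGroup E] [InnerProductSpace ℝ E]
    (γ : ℝ → E) (hγ : ContDiff ℝ (⊤ : ℕ∞) γ)
    (hnorm : ∀ j : ℕ, ∃ c : ℝ, ∀ t : ℝ, ‖iteratedDeriv j γ t‖ = c) :
    ∀ j k : ℕ, ∃ c : ℝ, ∀ t : ℝ, ⟪iteratedDeriv j γ t, iteratedDeriv k γ t⟫ = c := by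
  have hsm : ∀ j : ℕ, ContDiff ℝ ((⊤ : ℕ∞) : WithTop ℕ∞) (iteratedDeriv j γ) := by
    intro j
    rw [iteratedDeriv_eq_iterate]
    exact (hγ.of_le (by simp)).iterate_deriv j
  have hd : ∀ (j : ℕ) (t : ℝ),
      HasDerivAt (iteratedDeriv j γ) (iteratedDeriv (j + 1) γ t) t := by
    intro j t
    rw [iteratedDeriv_succ]
    exact ((hsm j).differentiable (by simp) t).hasDerivAt
  -- the derivative of the inner product of two iterated derivatives
  have hdi : ∀ (j k : ℕ) (t : ℝ),
      HasDerivAt (fun t => ⟪iteratedDeriv j γ t, iteratedDeriv k γ t⟫)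
        (⟪iteratedDeriv j γ t, iteratedDeriv (k + 1) γ t⟫ +
          ⟪iteratedDeriv (j + 1) γ t, iteratedDeriv k γ t⟫) t :=
    fun j k t => (hd j t).inner ℝ (hd k t)
  have key : ∀ d j : ℕ, ∃ c : ℝ, ∀ t : ℝ,
      ⟪iteratedDeriv j γ t, iteratedDeriv (j + d) γ t⟫ = c := by
    intro d
    induction d using Nat.strong_induction_on with
    | _ d ih =>
      match d with
      | 0 =>
        intro j
        obtain ⟨c, hc⟩ := hnorm j
        refine ⟨c * c, fun t => ?_⟩
        rw [Nat.add_zero, real_inner_self_eq_norm_mul_norm, hc t]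
      | 1 =>
        intro j
        refine ⟨0, fun t => ?_⟩
        obtain ⟨c, hc⟩ := hnorm j
        have hconst : (fun t => ⟪iteratedDeriv j γ t, iteratedDeriv j γ t⟫) = fun _ => c * c := by
          funext t
          rw [real_inner_self_eq_norm_mul_norm, hc t]
        have h0 : HasDerivAt (fun t => ⟪iteratedDeriv j γ t, iteratedDeriv j γ t⟫)
            (0 : ℝ) t := by
          rw [hconst]; exact hasDerivAt_const t _
        have := (hdi j j t).unique h0
        have hsymm : ⟪iteratedDeriv j γ t, iteratedDeriv (j + 1) γ t⟫ =
            ⟪iteratedDeriv (j + 1) γ t, iteratedDeriv j γ t⟫ := real_inner_comm _ _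
        rw [hsymm] at this
        linarith
      | (d + 2) =>
        intro j
        obtain ⟨c₁, hc₁⟩ := ih (d + 1) (by omega) j
        obtain ⟨c₂, hc₂⟩ := ih d (by omega) (j + 1)
        refine ⟨-c₂, fun t => ?_⟩
        have hconst : (fun t => ⟪iteratedDeriv j γ t, iteratedDeriv (j + (d + 1)) γ t⟫)
            = fun _ => c₁ := funext hc₁
        have h0 : HasDerivAt
            (fun t => ⟪iteratedDeriv j γ t, iteratedDeriv (j + (d + 1)) γ t⟫) (0 : ℝ) t := by
          rw [hconst]; exact hasDerivAt_const t _
        have huniq := (hdi j (j + (d + 1)) t).unique h0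
        have e1 : j + (d + 1) + 1 = j + (d + 2) := by omega
        have e2 : j + 1 + d = j + (d + 1) := by omega
        rw [e1] at huniq
        have := hc₂ t
        rw [e2] at this
        linarith
  intro j k
  rcases le_total j k with h | h
  · obtain ⟨c, hc⟩ := key (k - j) j
    refine ⟨c, fun t => ?_⟩
    have : j + (k - j) = k := by omega
    rw [this] at hc; exact hc t
  · obtain ⟨c, hc⟩ := key (j - k) k
    refine ⟨c, fun t => ?_⟩
    have e : k + (j - k) = j := by omega
    rw [e] at hc
    rw [real_inner_comm]; exact hc t
end

section
/- Let p ∈ ℕ, p ≥ 1, let A ∈ ℝ^{p×p} be skew-symmetric and B ∈ ℝ^{p×p}, and let γ(t) = exp(tS)·[I_p; 0]·exp(−tA) with S = [[2A, −Bᵀ],[B, 0]]. Then for every j ∈ ℕ the Frobenius norm of the j-th derivative of γ is constant in t: for all s, t ∈ ℝ, ‖γ^{(j)}(t)‖_F = ‖γ^{(j)}(s)‖_F. -/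
/-!
Time translation acts on the geodesic by fixed orthogonal matrices on both sides:
`γ (t + h) = exp (t S) γ h exp (-t A)`, and `exp (t S)`, `exp (-t A)` are orthogonal because
`S` and `A` are skew-symmetric. Two-sided multiplication by orthogonal matrices is a linear
isometry for the Frobenius norm, and iterated derivatives commute both with translation and with
linear isometries, so `γ⁽ʲ⁾ t` is an isometric image of `γ⁽ʲ⁾ 0`.
-/

open Matrix

attribute [local instance] Matrix.frobeniusNormedAddCommGroup Matrix.frobeniusNormedSpace

open NormedSpace

namespace Matrix

theorem fromBlocks_transpose_eq_neg {R m n : Type*} [Ring R] {A : Matrix m m R}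
    {D : Matrix n n R} (hA : Aᵀ = -A) (hD : Dᵀ = -D) (C : Matrix n m R) :
    (fromBlocks A (-Cᵀ) C D)ᵀ = -fromBlocks A (-Cᵀ) C D := by
  rw [fromBlocks_transpose, fromBlocks_neg, hA, hD, transpose_neg, transpose_transpose, neg_neg]

variable {𝕜 m n : Type*} [RCLike 𝕜] [Fintype m] [Fintype n]

theorem frobenius_norm_sq_eq_re_trace (X : Matrix m n 𝕜) :
    ‖X‖ ^ 2 = RCLike.re (Xᴴ * X).trace := by
  rw [frobenius_norm_def, ← Real.rpow_natCast, ← Real.rpow_mul (by positivity)]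
  simp only [trace, diag, mul_apply, conjTranspose_apply, RCLike.star_def, RCLike.conj_mul,
    map_sum, ← RCLike.ofReal_pow, RCLike.ofReal_re]
  rw [Finset.sum_comm]
  norm_num

theorem frobenius_norm_unitary_mul [DecidableEq m] {U : Matrix m m 𝕜}
    (hU : U ∈ unitaryGroup m 𝕜) (X : Matrix m n 𝕜) : ‖U * X‖ = ‖X‖ := by
  have hUU : Uᴴ * U = 1 := mem_unitaryGroup_iff'.mp hU
  refine (sq_eq_sq₀ (norm_nonneg _) (norm_nonneg _)).mp ?_
  rw [frobenius_norm_sq_eq_re_trace, frobenius_norm_sq_eq_re_trace, conjTranspose_mul,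
    Matrix.mul_assoc, ← Matrix.mul_assoc Uᴴ, hUU, Matrix.one_mul]

theorem frobenius_norm_mul_unitary [DecidableEq n] (X : Matrix m n 𝕜) {V : Matrix n n 𝕜}
    (hV : V ∈ unitaryGroup n 𝕜) : ‖X * V‖ = ‖X‖ := by
  rw [← frobenius_norm_conjTranspose, conjTranspose_mul,
    frobenius_norm_unitary_mul (U := Vᴴ) (Unitary.star_mem hV), frobenius_norm_conjTranspose]

variable [DecidableEq m] [DecidableEq n]

noncomputable def unitaryMulMul (U : unitaryGroup m 𝕜) (V : unitaryGroup n 𝕜) :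
    Matrix m n 𝕜 ≃ₗᵢ[𝕜] Matrix m n 𝕜 where
  toFun X := (U : Matrix m m 𝕜) * X * (V : Matrix n n 𝕜)
  invFun X := star (U : Matrix m m 𝕜) * X * star (V : Matrix n n 𝕜)
  map_add' X Y := by simp only [Matrix.mul_add, Matrix.add_mul]
  map_smul' c X := by simp only [Matrix.mul_smul, Matrix.smul_mul, RingHom.id_apply]
  left_inv X := by
    simp only [Matrix.mul_assoc, Unitary.mul_star_self_of_mem V.2, Matrix.mul_one]
    rw [← Matrix.mul_assoc, Unitary.star_mul_self_of_mem U.2, Matrix.one_mul]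
  right_inv X := by
    simp only [Matrix.mul_assoc, Unitary.star_mul_self_of_mem V.2, Matrix.mul_one]
    rw [← Matrix.mul_assoc, Unitary.mul_star_self_of_mem U.2, Matrix.one_mul]
  norm_map' X := by
    simp only [LinearEquiv.coe_mk, LinearMap.coe_mk, AddHom.coe_mk]
    rw [frobenius_norm_mul_unitary _ V.2, frobenius_norm_unitary_mul U.2]

theorem exp_mem_unitaryGroup {A : Matrix m m 𝕜} (hA : Aᴴ = -A) :
    exp A ∈ unitaryGroup m 𝕜 := by
  rw [mem_unitaryGroup_iff', star_eq_conjTranspose, ← exp_conjTranspose, hA,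
    ← exp_add_of_commute _ _ (Commute.refl A).neg_left, neg_add_cancel, exp_zero]

theorem exp_real_smul_mem_unitaryGroup {A : Matrix m m 𝕜} (hA : Aᴴ = -A) (t : ℝ) :
    exp (t • A) ∈ unitaryGroup m 𝕜 :=
  exp_mem_unitaryGroup <| by rw [conjTranspose_smul, hA, star_trivial, smul_neg]

theorem exp_add_smul (M : Matrix m m 𝕜) (a b : 𝕜) :
    exp ((a + b) • M) = exp (a • M) * exp (b • M) := by
  rw [add_smul, exp_add_of_commute]
  exact ((Commute.refl M).smul_left a).smul_right b

theorem exp_add_smul_mul_mul_exp_neg_add_smul (S : Matrix m m 𝕜) (A : Matrix n n 𝕜)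
    (Y : Matrix m n 𝕜) (t h : 𝕜) :
    exp ((t + h) • S) * Y * exp ((-(t + h)) • A) =
      exp (t • S) * (exp (h • S) * Y * exp ((-h) • A)) * exp ((-t) • A) := by
  rw [exp_add_smul, neg_add_rev, exp_add_smul]
  simp only [Matrix.mul_assoc]

end Matrix

theorem LinearIsometryEquiv.norm_iteratedDeriv_eq_of_comp_const_add {𝕜 F : Type*}
    [NontriviallyNormedField 𝕜] [NormedAddCommGroup F] [NormedSpace 𝕜 F] {f : 𝕜 → F} {t : 𝕜}
    (g : F ≃ₗᵢ[𝕜] F)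
    (hf : ∀ h, f (t + h) = g (f h)) (n : ℕ) :
    ‖iteratedDeriv n f t‖ = ‖iteratedDeriv n f 0‖ := by
  have hshift : iteratedDeriv n f t = iteratedDeriv n (g ∘ f) 0 := by
    rw [← show (fun h ↦ f (t + h)) = g ∘ f from funext hf, iteratedDeriv_comp_const_add]
    simp only [add_zero]
  rw [hshift, ← norm_iteratedFDeriv_eq_norm_iteratedDeriv, g.norm_iteratedFDeriv_comp_left,
    norm_iteratedFDeriv_eq_norm_iteratedDeriv]

theorem stiefel_geodesic_iteratedDeriv_norm_constant_general
    {p : ℕ}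
    (A B : Matrix (Fin p) (Fin p) ℝ) (hA : Aᵀ = -A)
    (S : Matrix (Fin p ⊕ Fin p) (Fin p ⊕ Fin p) ℝ)
    (hS : S = Matrix.fromBlocks (2 • A) (-Bᵀ) B 0)
    (γ : ℝ → Matrix (Fin p ⊕ Fin p) (Fin p) ℝ)
    (hγ : ∀ t : ℝ, γ t =
      NormedSpace.exp (t • S) * (Matrix.fromRows 1 0 : Matrix (Fin p ⊕ Fin p) (Fin p) ℝ) *
        NormedSpace.exp ((-t) • A)) :
    ∀ (j : ℕ) (s t : ℝ), ‖iteratedDeriv j γ t‖ = ‖iteratedDeriv j γ s‖ := by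
  have hA' : Aᴴ = -A := by rwa [conjTranspose_eq_transpose_of_trivial]
  have hS' : Sᴴ = -S := by
    rw [conjTranspose_eq_transpose_of_trivial, hS]
    exact fromBlocks_transpose_eq_neg (by rw [transpose_smul, hA, smul_neg]) (by simp) B
  have hconst (j : ℕ) (t : ℝ) : ‖iteratedDeriv j γ t‖ = ‖iteratedDeriv j γ 0‖ := by
    let g := unitaryMulMul ⟨_, exp_real_smul_mem_unitaryGroup hS' t⟩
      ⟨_, exp_real_smul_mem_unitaryGroup hA' (-t)⟩
    refine g.norm_iteratedDeriv_eq_of_comp_const_add (fun h ↦ ?_) j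
    rw [hγ, hγ]
    exact exp_add_smul_mul_mul_exp_neg_add_smul S A _ t h
  intro j s t
  rw [hconst j t, hconst j s]

/-- The Frobenius norm of every iterated derivative of a Euclidean Stiefel geodesic
`γ(t) = exp(tS) [I; 0] exp(-tA)`, `S = [[2A, -Bᵀ], [B, 0]]`, is constant in `t`. -/
theorem stiefel_geodesic_iteratedDeriv_norm_constant
    {p : ℕ} (hp : 1 ≤ p)
    (A B : Matrix (Fin p) (Fin p) ℝ) (hA : Aᵀ = -A)
    (S : Matrix (Fin p ⊕ Fin p) (Fin p ⊕ Fin p) ℝ)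
    (hS : S = Matrix.fromBlocks (2 • A) (-Bᵀ) B 0)
    (γ : ℝ → Matrix (Fin p ⊕ Fin p) (Fin p) ℝ)
    (hγ : ∀ t : ℝ, γ t =
      NormedSpace.exp (t • S) * (Matrix.fromRows 1 0 : Matrix (Fin p ⊕ Fin p) (Fin p) ℝ) *
        NormedSpace.exp ((-t) • A)) :
    ∀ (j : ℕ) (s t : ℝ), ‖iteratedDeriv j γ t‖ = ‖iteratedDeriv j γ s‖ :=
  stiefel_geodesic_iteratedDeriv_norm_constant_general A B hA S hS γ hγ
end

section
/- Let p ∈ ℕ, p ≥ 1, let A ∈ ℝ^{p×p} be skew-symmetric and B ∈ ℝ^{p×p}, and let γ(t) = exp(tS)·[I_p; 0]·exp(−tA) with S = [[2A, −Bᵀ],[B, 0]]. Then for all j, k ∈ ℕ the Frobenius inner product tr((γ^{(j)}(t))ᵀ · γ^{(k)}(t)) is constant in t ∈ ℝ. -/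
/-!
Both factors `exp (t • S)` and `exp (-t • A)` are orthogonal, since `S` and `A` are
skew-symmetric. Differentiating `t ↦ exp (t • X) * C * exp (t • Y)` only replaces the constant
middle factor `C` by `X * C + C * Y`, so every derivative of `γ` is `exp (t • S) * C * exp (-t • A)`
for a constant `C`, and the Frobenius inner product of two such matrices does not see the
orthogonal factors.
-/

open Matrix NormedSpace

attribute [local instance] Matrix.frobeniusNormedAddCommGroup Matrix.frobeniusNormedSpace
attribute [local instance] Matrix.frobeniusNormedRing Matrix.frobeniusNormedAlgebra

namespace Matrix

variable {l m n : Type*} [Fintype l] [Fintype m] [Fintype n]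

theorem trace_transpose_mul_of_mem_orthogonalGroup {R : Type*} [CommRing R] [DecidableEq m]
    [DecidableEq n] {U : Matrix m m R} {V : Matrix n n R} (hU : U ∈ orthogonalGroup m R)
    (hV : V ∈ orthogonalGroup n R) (C D : Matrix m n R) :
    trace ((U * C * V)ᵀ * (U * D * V)) = trace (Cᵀ * D) := by
  rw [mem_orthogonalGroup_iff'] at hU
  rw [mem_orthogonalGroup_iff] at hV
  calc trace ((U * C * V)ᵀ * (U * D * V))
      = trace (Vᵀ * (Cᵀ * (Uᵀ * U) * D * V)) := by simp only [transpose_mul, Matrix.mul_assoc]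
    _ = trace (Cᵀ * D * (V * Vᵀ)) := by rw [trace_mul_comm, hU, Matrix.mul_one, Matrix.mul_assoc]
    _ = trace (Cᵀ * D) := by rw [hV, Matrix.mul_one]

theorem exp_mem_orthogonalGroup {𝔸 : Type*} [NormedCommRing 𝔸] [NormedAlgebra ℚ 𝔸]
    [CompleteSpace 𝔸] [DecidableEq m] {X : Matrix m m 𝔸} (hX : Xᵀ = -X) :
    exp X ∈ orthogonalGroup m 𝔸 := by
  rw [mem_orthogonalGroup_iff', ← exp_transpose, hX,
    ← exp_add_of_commute _ _ (Commute.refl X).neg_left, neg_add_cancel, exp_zero]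

theorem isBoundedBilinearMap_mul :
    IsBoundedBilinearMap ℝ (fun q : Matrix l m ℝ × Matrix m n ℝ => q.1 * q.2) where
  add_left := Matrix.add_mul
  smul_left := Matrix.smul_mul
  add_right := Matrix.mul_add
  smul_right c x y := Matrix.mul_smul x c y
  bound := ⟨1, one_pos, fun x y => by simpa using frobenius_norm_mul x y⟩

theorem _root_.HasDerivAt.matrix_mul {u : ℝ → Matrix l m ℝ} {v : ℝ → Matrix m n ℝ}
    {u' : Matrix l m ℝ} {v' : Matrix m n ℝ} {t : ℝ} (hu : HasDerivAt u u' t)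
    (hv : HasDerivAt v v' t) :
    HasDerivAt (fun s => u s * v s) (u t * v' + u' * v t) t := by
  have h := (isBoundedBilinearMap_mul.hasFDerivAt (u t, v t)).comp_hasDerivAt t (hu.prodMk hv)
  simp only [IsBoundedBilinearMap.deriv_apply] at h
  -- `h` is stated for the Frobenius topology; only `exact` sees through to the default one.
  exact h

variable [DecidableEq m] [DecidableEq n]

theorem hasDerivAt_exp_smul_mul_mul_exp_smul (X : Matrix m m ℝ) (Y : Matrix n n ℝ)
    (C : Matrix m n ℝ) (t : ℝ) :
    HasDerivAt (fun s : ℝ => exp (s • X) * C * exp (s • Y))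
      (exp (t • X) * (X * C + C * Y) * exp (t • Y)) t := by
  have hX : HasDerivAt (fun s : ℝ => exp (s • X) * C) (exp (t • X) * X * C) t := by
    have h := (hasDerivAt_exp_smul_const X t).matrix_mul (hasDerivAt_const t C)
    rwa [Matrix.mul_zero, zero_add] at h
  have hXY := hX.matrix_mul (hasDerivAt_exp_smul_const' Y t)
  rw [Matrix.mul_add, Matrix.add_mul, add_comm]
  simp only [Matrix.mul_assoc] at hXY ⊢
  exact hXY

theorem iteratedDeriv_exp_smul_mul_mul_exp_smul (X : Matrix m m ℝ) (Y : Matrix n n ℝ)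
    (k : ℕ) (C : Matrix m n ℝ) :
    iteratedDeriv k (fun t : ℝ => exp (t • X) * C * exp (t • Y)) =
      fun t => exp (t • X) * ((fun D => X * D + D * Y)^[k] C) * exp (t • Y) := by
  induction k generalizing C with
  | zero => simp
  | succ k ih =>
    rw [iteratedDeriv_succ', Function.iterate_succ_apply, ← ih]
    congr 1
    exact funext fun t => (hasDerivAt_exp_smul_mul_mul_exp_smul X Y C t).deriv

end Matrix

theorem stiefel_geodesic_iteratedDeriv_inner_constant_general
    {p : ℕ}
    (A B : Matrix (Fin p) (Fin p) ℝ) (hA : Aᵀ = -A)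
    (S : Matrix (Fin p ⊕ Fin p) (Fin p ⊕ Fin p) ℝ)
    (hS : S = Matrix.fromBlocks (2 • A) (-Bᵀ) B 0)
    (γ : ℝ → Matrix (Fin p ⊕ Fin p) (Fin p) ℝ)
    (hγ : ∀ t : ℝ, γ t =
      NormedSpace.exp (t • S) * (Matrix.fromRows 1 0 : Matrix (Fin p ⊕ Fin p) (Fin p) ℝ) *
        NormedSpace.exp ((-t) • A)) :
    ∀ j k : ℕ, ∃ c : ℝ, ∀ t : ℝ,
      Matrix.trace ((iteratedDeriv j γ t)ᵀ * iteratedDeriv k γ t) = c := by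
  intro j k
  have hS_skew : Sᵀ = -S := by
    rw [hS, fromBlocks_transpose, fromBlocks_neg, transpose_smul, hA, transpose_neg,
      transpose_transpose, transpose_zero, smul_neg, neg_neg, neg_zero]
  have h_skew_smul {q : Type} {X : Matrix q q ℝ} (hX : Xᵀ = -X) (t : ℝ) :
      (t • X)ᵀ = -(t • X) := by
    rw [transpose_smul, hX, smul_neg]
  set E : Matrix (Fin p ⊕ Fin p) (Fin p) ℝ := fromRows 1 0
  have hγ_eq : γ = fun t => exp (t • S) * E * exp (t • -A) :=
    funext fun t => by rw [hγ, neg_smul, smul_neg]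
  set D := fun C : Matrix (Fin p ⊕ Fin p) (Fin p) ℝ => S * C + C * -A
  refine ⟨trace ((D^[j] E)ᵀ * D^[k] E), fun t => ?_⟩
  rw [hγ_eq, iteratedDeriv_exp_smul_mul_mul_exp_smul, iteratedDeriv_exp_smul_mul_mul_exp_smul]
  exact trace_transpose_mul_of_mem_orthogonalGroup
    (exp_mem_orthogonalGroup (h_skew_smul hS_skew t))
    (exp_mem_orthogonalGroup (h_skew_smul (by rw [transpose_neg, hA]) t)) _ _

/-- The Frobenius inner products `tr((γ⁽ʲ⁾(t))ᵀ γ⁽ᵏ⁾(t))` of the iterated derivatives of a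
Euclidean Stiefel geodesic `γ(t) = exp(tS) [I; 0] exp(-tA)`, `S = [[2A, -Bᵀ], [B, 0]]`,
are constant in `t`. -/
theorem stiefel_geodesic_iteratedDeriv_inner_constant
    {p : ℕ} (hp : 1 ≤ p)
    (A B : Matrix (Fin p) (Fin p) ℝ) (hA : Aᵀ = -A)
    (S : Matrix (Fin p ⊕ Fin p) (Fin p ⊕ Fin p) ℝ)
    (hS : S = Matrix.fromBlocks (2 • A) (-Bᵀ) B 0)
    (γ : ℝ → Matrix (Fin p ⊕ Fin p) (Fin p) ℝ)
    (hγ : ∀ t : ℝ, γ t =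
      NormedSpace.exp (t • S) * (Matrix.fromRows 1 0 : Matrix (Fin p ⊕ Fin p) (Fin p) ℝ) *
        NormedSpace.exp ((-t) • A)) :
    ∀ j k : ℕ, ∃ c : ℝ, ∀ t : ℝ,
      Matrix.trace ((iteratedDeriv j γ t)ᵀ * iteratedDeriv k γ t) = c :=
  stiefel_geodesic_iteratedDeriv_inner_constant_general A B hA S hS γ hγ
end

section
/- Let A ∈ ℝ^{p×p} be skew-symmetric and B ∈ ℝ^{p×p} with ‖A‖_F² + ‖B‖_F² = 1 (Frobenius norms). Then tr(A⁴) + tr((2AᵀA + BᵀB)·BᵀB) ≤ 1. -/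
open Matrix

attribute [local instance] Matrix.frobeniusNormedAddCommGroup Matrix.frobeniusNormedSpace

/-- The trace inequality behind the curvature bound for Euclidean Stiefel geodesics:
if `Aᵀ = -A` and `‖A‖_F² + ‖B‖_F² = 1`, then
`tr(A⁴) + tr((2AᵀA + BᵀB)·BᵀB) ≤ 1`. -/
theorem trace_inequality_skew
    {p : ℕ} (A B : Matrix (Fin p) (Fin p) ℝ) (hA : Aᵀ = -A)
    (hAB : ‖A‖ ^ 2 + ‖B‖ ^ 2 = 1) :
    Matrix.trace (A * A * A * A) +
      Matrix.trace ((2 • (Aᵀ * A) + Bᵀ * B) * (Bᵀ * B)) ≤ 1 := by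
  have hnorm : ∀ C : Matrix (Fin p) (Fin p) ℝ, ‖C‖ ^ 2 = Matrix.trace (Cᵀ * C) := by
    intro C
    rw [Matrix.frobenius_norm_def, ← Real.rpow_natCast _ 2, ← Real.rpow_mul (by positivity)]
    norm_num
    rw [Matrix.trace]
    simp only [Matrix.diag, Matrix.mul_apply, Matrix.transpose_apply, Real.norm_eq_abs, sq_abs]
    rw [Finset.sum_comm]
    congr 1; ext i; congr 1; ext j
    rw [← Real.rpow_natCast _ 2]
    norm_num [pow_two]
  set S := Aᵀ * A with hS
  set T := Bᵀ * B with hT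
  set M := S + T with hM
  -- trace of M is 1
  have htrM : Matrix.trace M = 1 := by
    rw [hM, Matrix.trace_add, ← hnorm, ← hnorm, hAB]
  -- A⁴ = S * S
  have hA4 : A * A * A * A = S * S := by
    have h2 : A * A = -S := by rw [hS, hA]; simp
    calc A * A * A * A = (A * A) * (A * A) := by rw [mul_assoc, ← mul_assoc]
    _ = (-S) * (-S) := by rw [h2]
    _ = S * S := by simp
  -- LHS equals trace (M * M)
  have hLHS : Matrix.trace (A * A * A * A) + Matrix.trace ((2 • S + T) * T)
      = Matrix.trace (M * M) := by
    rw [hA4, hM]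
    simp only [add_mul, mul_add, Matrix.trace_add, smul_mul_assoc, Matrix.trace_smul,
      Matrix.trace_mul_comm T S]
    ring
  rw [hLHS]
  -- symmetry of M
  have hMsymm : ∀ i j, M i j = M j i := by
    intro i j
    simp [hM, hS, hT, Matrix.add_apply, Matrix.mul_apply, Matrix.transpose_apply,
      mul_comm]
  -- Cauchy-Schwarz entrywise
  have hCS : ∀ i j, M i j ^ 2 ≤ M i i * M j j := by
    intro i j
    have := Finset.sum_mul_sq_le_sq_mul_sq (Finset.univ : Finset (Fin p ⊕ Fin p))
      (Sum.elim (fun k => A k i) fun k => B k i)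
      (Sum.elim (fun k => A k j) fun k => B k j)
    simpa [Fintype.sum_sum_type, hM, hS, hT, Matrix.add_apply, Matrix.mul_apply,
      Matrix.transpose_apply, pow_two] using this
  calc Matrix.trace (M * M) = ∑ i, ∑ j, M i j ^ 2 := by
        rw [Matrix.trace]
        simp only [Matrix.diag, Matrix.mul_apply]
        congr 1; ext i; congr 1; ext j
        rw [pow_two, hMsymm i j]
    _ ≤ ∑ i, ∑ j, M i i * M j j := by
        refine Finset.sum_le_sum fun i _ => Finset.sum_le_sum fun j _ => hCS i j
    _ = Matrix.trace M * Matrix.trace M := by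
        simp only [Matrix.trace, Matrix.diag]
        rw [Finset.sum_mul_sum]
    _ = 1 := by rw [htrM]; norm_num
end

section
/- Let m ∈ ℕ, m ≥ 1, let a, b : Fin m → ℝ satisfy ∑_{i} a_i² b_i² = 1 and ∑_{i} a_i² b_i⁴ ≤ 1, and let k > 0 be a real number such that for every index i with a_i · b_i ≠ 0 there exists an integer l with b_i · k = 2π · l. Then k ≥ 2π. -/
open Real

/-- A closed unit-speed curve of the normal form
`γ(t) = (a₁ cos(b₁t), a₁ sin(b₁t), …, a_m cos(b_m t), a_m sin(b_m t))` with first Frenet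
curvature at most one closes up only after a parameter length of at least `2π`. -/
theorem closed_normal_form_length_ge_two_pi
    {m : ℕ} (hm : 1 ≤ m) (a b : Fin m → ℝ)
    (h1 : ∑ i, a i ^ 2 * b i ^ 2 = 1)
    (h2 : ∑ i, a i ^ 2 * b i ^ 4 ≤ 1)
    (k : ℝ) (hk : 0 < k)
    (hclose : ∀ i : Fin m, a i * b i ≠ 0 → ∃ l : ℤ, b i * k = 2 * π * l) :
    2 * π ≤ k := by
  have hpi := Real.pi_pos
  set c : ℝ := (2 * π / k) ^ 2 with hc
  have key : ∀ i ∈ Finset.univ (α := Fin m),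
      c * (a i ^ 2 * b i ^ 2) ≤ a i ^ 2 * b i ^ 4 := by
    intro i _
    by_cases hab : a i * b i = 0
    · have : a i ^ 2 * b i ^ 2 = 0 := by
        have := sq_eq_zero_iff.mpr hab
        nlinarith [this]
      rw [this]
      nlinarith [sq_nonneg (a i * b i ^ 2)]
    · obtain ⟨l, hl⟩ := hclose i hab
      have hb : b i ≠ 0 := fun h => hab (by simp [h])
      have hl0 : l ≠ 0 := by
        intro h
        rw [h] at hl
        simp at hl
        rcases hl with h | h
        · exact hb h
        · exact ne_of_gt hk h
      have hlabs : (1 : ℝ) ≤ |(l : ℝ)| := by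
        rw [← Int.cast_abs]
        exact_mod_cast Int.one_le_abs hl0
      have habs : 2 * π ≤ |b i| * k := by
        have : |b i * k| = 2 * π * |(l : ℝ)| := by
          rw [hl, abs_mul, abs_of_pos (by positivity : (0:ℝ) < 2 * π)]
        rw [abs_mul, abs_of_pos hk] at this
        nlinarith
      have hbsq : c ≤ b i ^ 2 := by
        rw [hc, div_pow]
        rw [div_le_iff₀ (by positivity)]
        have : |b i| ^ 2 = b i ^ 2 := sq_abs _
        nlinarith [abs_nonneg (b i), sq_nonneg (|b i| * k - 2 * π)]
      have h4 : b i ^ 4 = b i ^ 2 * b i ^ 2 := by ring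
      nlinarith [sq_nonneg (a i * b i), sq_nonneg (a i), sq_nonneg (b i)]
  have hsum : c * (∑ i, a i ^ 2 * b i ^ 2) ≤ ∑ i, a i ^ 2 * b i ^ 4 := by
    rw [Finset.mul_sum]
    exact Finset.sum_le_sum key
  rw [h1, mul_one] at hsum
  have hc1 : (2 * π / k) ^ 2 ≤ 1 := le_trans hsum h2
  have : 2 * π / k ≤ 1 := by
    nlinarith [div_pos (by positivity : (0:ℝ) < 2 * π) hk]
  calc 2 * π = (2 * π / k) * k := by field_simp
    _ ≤ 1 * k := by nlinarith
    _ = k := one_mul k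
end

section
/- Define γ : ℝ → ℝ^{4×2} by γ(t) = [[cos t, 0],[0,1],[sin t, 0],[0,0]]. Then: (i) γ(t)ᵀ·γ(t) = I₂ for all t ∈ ℝ (γ lies on the Stiefel manifold St(4,2)); (ii) γ is 2π-periodic, in particular γ(2π) = γ(0) = [I₂; 0]; (iii) ‖γ'(t)‖_F = 1 for all t ∈ ℝ, so the length of γ over [0, 2π] equals 2π; and (iv) γ coincides with the Euclidean Stiefel geodesic exp(tS)·[I₂; 0]·exp(−tA) for A = 0 and B = [[1,0],[0,0]], where S = [[2A, −Bᵀ],[B, 0]]. Hence there exists a closed unit-speed Euclidean Stiefel geodesic of length exactly 2π. -/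
/-!
For `S = [[0, -Bᵀ], [B, 0]]` with `B = E₁₁` one has `S³ = -S`, so Rodrigues' formula
`exp (t S) = 1 + sin t • S + (1 - cos t) • S²` holds; it follows from uniqueness for the linear
ODE `R' = S R`, since `exp (-t S) * R t` has zero derivative. Applied to the frame `E = [I₂; 0]`
this gives `γ t = E + sin t • S E + (1 - cos t) • S² E`, whose velocity
`cos t • S E + sin t • S² E` has Frobenius norm `√(cos² t + sin² t) = 1`.
-/

open Matrix Real

attribute [local instance] Matrix.frobeniusNormedAddCommGroup Matrix.frobeniusNormedSpace

theorem hasDerivAt_add_sin_smul_add_one_sub_cos_smul {E : Type*} [NormedAddCommGroup E]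
    [NormedSpace ℝ E] (Z X Y : E) (t : ℝ) :
    HasDerivAt (fun t => Z + sin t • X + (1 - cos t) • Y) (cos t • X + sin t • Y) t := by
  refine ((((hasDerivAt_sin t).smul_const X).const_add Z).add
    (((hasDerivAt_cos t).const_sub 1).smul_const Y)).congr_deriv ?_
  simp

section LinearODE

variable {𝔸 : Type*} [NormedRing 𝔸] [NormedAlgebra ℝ 𝔸] [CompleteSpace 𝔸]

theorem exp_neg_smul_mul_eq_of_hasDerivAt {R : ℝ → 𝔸} {S : 𝔸}
    (hR : ∀ t, HasDerivAt R (S * R t) t) (t : ℝ) :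
    NormedSpace.exp ((-t) • S) * R t = R 0 := by
  have hexp_neg (u : ℝ) : HasDerivAt (fun u : ℝ => NormedSpace.exp ((-u) • S))
      (-(S * NormedSpace.exp ((-u) • S))) u := by
    simpa [Function.comp_def] using
      (hasDerivAt_exp_smul_const' S (-u)).scomp u (hasDerivAt_neg u)
  have hconst (u : ℝ) : HasDerivAt (fun u => NormedSpace.exp ((-u) • S) * R u) 0 u := by
    refine ((hexp_neg u).mul (hR u)).congr_deriv ?_
    rw [← mul_assoc, ((Commute.refl S).smul_left (-u)).exp_left.eq, neg_mul, neg_add_cancel]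
  simpa using is_const_of_deriv_eq_zero (fun u => (hconst u).differentiableAt)
    (fun u => (hconst u).deriv) t 0

theorem exp_smul_mul_exp_neg_smul (S : 𝔸) (t : ℝ) :
    NormedSpace.exp (t • S) * NormedSpace.exp ((-t) • S) = 1 := by
  simpa using exp_neg_smul_mul_eq_of_hasDerivAt (hasDerivAt_exp_smul_const' S) (-t)

theorem eq_exp_smul_mul_of_hasDerivAt {R : ℝ → 𝔸} {S : 𝔸}
    (hR : ∀ t, HasDerivAt R (S * R t) t) (t : ℝ) :
    R t = NormedSpace.exp (t • S) * R 0 := by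
  rw [← exp_neg_smul_mul_eq_of_hasDerivAt hR t, ← mul_assoc, exp_smul_mul_exp_neg_smul, one_mul]

theorem exp_smul_eq_of_pow_three_eq_neg {S : 𝔸} (hS : S ^ 3 = -S) (t : ℝ) :
    NormedSpace.exp (t • S) = 1 + sin t • S + (1 - cos t) • S ^ 2 := by
  have hR (u : ℝ) : HasDerivAt (fun u => 1 + sin u • S + (1 - cos u) • S ^ 2)
      (S * (1 + sin u • S + (1 - cos u) • S ^ 2)) u := by
    refine (hasDerivAt_add_sin_smul_add_one_sub_cos_smul 1 S (S ^ 2) u).congr_deriv ?_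
    rw [mul_add, mul_add, mul_one, mul_smul_comm, mul_smul_comm, ← pow_succ', hS, ← sq]
    module
  simpa using (eq_exp_smul_mul_of_hasDerivAt hR t).symm

end LinearODE

theorem finSumFinEquiv_symm_two_two :
    ⇑(finSumFinEquiv (m := 2) (n := 2)).symm = ![.inl 0, .inl 1, .inr 0, .inr 1] := by
  decide

namespace St42

def generator : Matrix (Fin 4) (Fin 4) ℝ := !![0, 0, -1, 0; 0, 0, 0, 0; 1, 0, 0, 0; 0, 0, 0, 0]

def baseFrame : Matrix (Fin 4) (Fin 2) ℝ := !![1, 0; 0, 1; 0, 0; 0, 0]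

theorem fromBlocks_submatrix_eq_generator :
    (fromBlocks (2 • 0) (-!![1, 0; 0, 0]ᵀ) !![1, 0; 0, 0] 0 :
      Matrix (Fin 2 ⊕ Fin 2) (Fin 2 ⊕ Fin 2) ℝ).submatrix
      finSumFinEquiv.symm finSumFinEquiv.symm = generator := by
  rw [finSumFinEquiv_symm_two_two]
  ext i j
  fin_cases i <;> fin_cases j <;> simp [generator]

theorem fromRows_submatrix_eq_baseFrame :
    (fromRows 1 0 : Matrix (Fin 2 ⊕ Fin 2) (Fin 2) ℝ).submatrix finSumFinEquiv.symm id =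
      baseFrame := by
  rw [finSumFinEquiv_symm_two_two]
  ext i j
  fin_cases i <;> fin_cases j <;> simp [baseFrame, one_apply]

theorem generator_pow_three : generator ^ 3 = -generator := by
  ext i j
  fin_cases i <;> fin_cases j <;> simp [generator, pow_succ, mul_apply, Fin.sum_univ_four]

theorem generator_mul_baseFrame : generator * baseFrame = !![0, 0; 0, 0; 1, 0; 0, 0] := by
  ext i j
  fin_cases i <;> fin_cases j <;> simp [generator, baseFrame, mul_apply, Fin.sum_univ_four]

theorem generator_sq_mul_baseFrame : generator ^ 2 * baseFrame = !![-1, 0; 0, 0; 0, 0; 0, 0] := by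
  ext i j
  fin_cases i <;> fin_cases j <;> simp [generator, baseFrame, sq, mul_apply, Fin.sum_univ_four]

theorem curve_eq (t : ℝ) :
    !![cos t, 0; 0, 1; sin t, 0; 0, 0] =
      baseFrame + sin t • (generator * baseFrame) + (1 - cos t) • (generator ^ 2 * baseFrame) := by
  rw [generator_mul_baseFrame, generator_sq_mul_baseFrame]
  ext i j
  fin_cases i <;> fin_cases j <;> simp [baseFrame]

section

attribute [local instance] Matrix.frobeniusNormedRing Matrix.frobeniusNormedAlgebra

theorem curve_eq_exp_smul_generator_mul_baseFrame (t : ℝ) :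
    !![cos t, 0; 0, 1; sin t, 0; 0, 0] = NormedSpace.exp (t • generator) * baseFrame := by
  rw [show NormedSpace.exp (t • generator) = _ from
    exp_smul_eq_of_pow_three_eq_neg generator_pow_three t, curve_eq]
  simp only [Matrix.add_mul, Matrix.one_mul, Matrix.smul_mul]

end

theorem norm_cos_smul_add_sin_smul (t : ℝ) :
    ‖cos t • (generator * baseFrame) + sin t • (generator ^ 2 * baseFrame)‖ = 1 := by
  rw [generator_mul_baseFrame, generator_sq_mul_baseFrame, frobenius_norm_def]
  simp [Fin.sum_univ_succ]

theorem curve_transpose_mul_self (t : ℝ) :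
    (!![cos t, 0; 0, 1; sin t, 0; 0, 0])ᵀ * !![cos t, 0; 0, 1; sin t, 0; 0, 0] = 1 := by
  ext i j
  fin_cases i <;> fin_cases j <;> simp [mul_apply, Fin.sum_univ_four, one_apply, ← sq]

end St42

open St42

/-- The explicit curve `γ(t) = [[cos t, 0], [0, 1], [sin t, 0], [0, 0]]` is a closed
unit-speed Euclidean Stiefel geodesic on `St(4,2)` of length exactly `2π`:
(i) it lies on `St(4,2)`; (ii) it is `2π`-periodic with `γ(2π) = γ(0) = [I₂; 0]`;
(iii) it is parameterized by arc length, so its length over `[0, 2π]` is `2π`; and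
(iv) it is the Euclidean Stiefel geodesic with `A = 0` and `B = [[1,0],[0,0]]`. -/
theorem st42_explicit_closed_geodesic
    (γ : ℝ → Matrix (Fin 4) (Fin 2) ℝ)
    (hγ : ∀ t : ℝ, γ t = !![Real.cos t, 0; 0, 1; Real.sin t, 0; 0, 0])
    (A B : Matrix (Fin 2) (Fin 2) ℝ) (hA : A = 0) (hB : B = !![1, 0; 0, 0])
    (S : Matrix (Fin 4) (Fin 4) ℝ)
    (hS : S = (Matrix.fromBlocks (2 • A) (-Bᵀ) B 0).submatrix
      finSumFinEquiv.symm finSumFinEquiv.symm) :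
    (∀ t : ℝ, (γ t)ᵀ * γ t = 1)
    ∧ (∀ t : ℝ, γ (t + 2 * π) = γ t)
    ∧ γ (2 * π) = γ 0
    ∧ γ 0 = !![1, 0; 0, 1; 0, 0; 0, 0]
    ∧ (∀ t : ℝ, ‖deriv γ t‖ = 1)
    ∧ (∫ t in (0 : ℝ)..(2 * π), ‖deriv γ t‖) = 2 * π
    ∧ (∀ t : ℝ, γ t =
        NormedSpace.exp (t • S) *
          ((Matrix.fromRows 1 0 : Matrix (Fin 2 ⊕ Fin 2) (Fin 2) ℝ).submatrix
            finSumFinEquiv.symm id) *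
          NormedSpace.exp ((-t) • A)) := by
  have hperiodic (t : ℝ) : γ (t + 2 * π) = γ t := by rw [hγ, hγ, cos_add_two_pi, sin_add_two_pi]
  have hspeed (t : ℝ) : ‖deriv γ t‖ = 1 := by
    have hvelocity : HasDerivAt γ
        (cos t • (generator * baseFrame) + sin t • (generator ^ 2 * baseFrame)) t := by
      rw [show γ = _ from funext fun t => (hγ t).trans (curve_eq t)]
      exact hasDerivAt_add_sin_smul_add_one_sub_cos_smul _ _ _ t
    rw [show deriv γ t = _ from hvelocity.deriv, norm_cos_smul_add_sin_smul]
  refine ⟨fun t => hγ t ▸ curve_transpose_mul_self t, hperiodic, by simpa using hperiodic 0,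
    by simp [hγ], hspeed, by simp [hspeed], fun t => ?_⟩
  rw [hS, hA, hB, fromBlocks_submatrix_eq_generator, fromRows_submatrix_eq_baseFrame, smul_zero,
    NormedSpace.exp_zero, Matrix.mul_one, hγ, curve_eq_exp_smul_generator_mul_baseFrame]
end
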